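/- As T → ∞, ∑_{1 ≤ m < n ≤ T} d(m)·d(n)/(√(mn) · log(n/m)) = O(T (log T)³). -/

import Mathlib

/-!
For `m < n` one has `1 / (√(mn) log(n/m)) ≤ 2 / √(mn) + 2 / (n - m)`: if `n ≥ 2m` the logarithm is
at least `log 2 > 1/2`, otherwise `log(n/m) ≥ (n - m)/n` and `√(mn) ≥ n/2`.

The first part contributes at most `2 (∑_{n ≤ N} d(n)/√n)² = O(N log² N)`.
For the second, group the pairs by `r = n - m` and use `d(k) ≤ 2 #{a ≤ √N : a ∣ k}` for `k ≤ N`.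
The number of `m ≤ N` with `a ∣ m` and `b ∣ m + r` is at most `2N / lcm(a, b)`, and zero unless
`gcd(a, b) ∣ r`; summing `1/r` over the multiples of `gcd(a, b)` gives `(1 + log N) / gcd(a, b)`.
Since `lcm · gcd = ab`, the second part is at most `8N (1 + log N) (∑_{a ≤ √N} 1/a)² = O(N log³ N)`.
-/

open Filter Asymptotics Finset Real

lemma sum_Icc_inv_le_one_add_log {M N : ℕ} (hMN : M ≤ N) :
    ∑ k ∈ Icc 1 M, (k : ℝ)⁻¹ ≤ 1 + log N := by
  have h := harmonic_le_one_add_log M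
  simp only [harmonic_eq_sum_Icc, Rat.cast_sum, Rat.cast_inv, Rat.cast_natCast] at h
  refine h.trans (add_le_add_right ?_ 1)
  rcases M.eq_zero_or_pos with rfl | hM
  · simpa using log_natCast_nonneg N
  · exact log_le_log (by positivity) (by exact_mod_cast hMN)

lemma sum_Icc_inv_sqrt_le (M : ℕ) : ∑ k ∈ Icc 1 M, (√k)⁻¹ ≤ 2 * √M := by
  induction M with
  | zero => simp
  | succ M ih =>
    rw [sum_Icc_succ_top (by omega), Nat.cast_succ]
    have hM : 0 < √(M + 1 : ℝ) := by positivity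
    have htelescope : (√(M + 1 : ℝ))⁻¹ ≤ 2 * (√(M + 1 : ℝ) - √M) := by
      rw [inv_le_iff_one_le_mul₀ hM]
      nlinarith [sq_sqrt (Nat.cast_nonneg (α := ℝ) M), sq_sqrt (by positivity : (0 : ℝ) ≤ M + 1),
        sq_nonneg (√(M + 1 : ℝ) - √M)]
    linarith

lemma sum_Icc_filter_dvd_eq {M : Type*} [AddCommMonoid M] (N : ℕ) {a : ℕ} (ha : 0 < a)
    (f : ℕ → M) : ∑ n ∈ Icc 1 N with a ∣ n, f n = ∑ b ∈ Icc 1 (N / a), f (a * b) := by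
  symm
  refine sum_nbij (a * ·) (fun b hb => ?_) (fun b _ c _ h => Nat.eq_of_mul_eq_mul_left ha h)
    (fun n hn => ?_) (fun _ _ => rfl)
  · simp only [mem_Icc, mem_filter] at hb ⊢
    refine ⟨⟨Nat.mul_pos ha hb.1, ?_⟩, dvd_mul_right a b⟩
    rw [mul_comm]
    exact (Nat.le_div_iff_mul_le ha).1 hb.2
  · simp only [coe_filter, mem_Icc, Set.mem_ofPred_eq] at hn
    obtain ⟨⟨hn1, hnN⟩, b, rfl⟩ := hn
    refine ⟨b, ?_, rfl⟩
    simp only [coe_Icc, Set.mem_Icc]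
    exact ⟨Nat.one_le_iff_ne_zero.2 (by rintro rfl; simp at hn1),
      (Nat.le_div_iff_mul_le ha).2 (by linarith)⟩

lemma sum_Icc_filter_dvd_inv_le (N : ℕ) {g : ℕ} (hg : 0 < g) :
    ∑ r ∈ Icc 1 N with g ∣ r, (r : ℝ)⁻¹ ≤ (1 + log N) / g := by
  simp only [sum_Icc_filter_dvd_eq N hg, Nat.cast_mul, mul_inv, ← mul_sum]
  rw [div_eq_inv_mul]
  gcongr
  exact sum_Icc_inv_le_one_add_log (Nat.div_le_self N g)

lemma sum_Icc_sum_Ico_eq_sum_Icc_sum_Icc_sub {M : Type*} [AddCommMonoid M] (N : ℕ)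
    (f : ℕ → ℕ → M) :
    ∑ n ∈ Icc 1 N, ∑ m ∈ Ico 1 n, f m n = ∑ r ∈ Icc 1 N, ∑ m ∈ Icc 1 (N - r), f m (m + r) := by
  rw [sum_sigma', sum_sigma']
  refine sum_nbij' (fun p => ⟨p.1 - p.2, p.2⟩) (fun p => ⟨p.2 + p.1, p.2⟩) ?_ ?_ ?_ ?_ ?_
  all_goals
    rintro ⟨n, m⟩ h
    simp only [mem_sigma, mem_Icc, mem_Ico] at h
  · simp only [mem_sigma, mem_Icc]; omega
  · simp only [mem_sigma, mem_Icc, mem_Ico]; omega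
  · simp only [Sigma.mk.injEq, heq_eq_eq, and_true]; omega
  · simp only [Sigma.mk.injEq, heq_eq_eq, and_true]; omega
  · simp only
    rw [Nat.add_sub_cancel' h.2.2.le]

lemma card_divisors_le_two_mul_card_filter_dvd {n N : ℕ} (hn : 0 < n) (hnN : n ≤ N) :
    #n.divisors ≤ 2 * #{a ∈ Icc 1 N.sqrt | a ∣ n} := by
  set small := {a ∈ Icc 1 N.sqrt | a ∣ n}
  have hmem : ∀ a, a ∣ n → a * a ≤ n → a ∈ small := fun a ha haa => by
    simp only [small, mem_filter, mem_Icc]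
    exact ⟨⟨Nat.pos_of_dvd_of_pos ha hn, Nat.le_sqrt.2 (haa.trans hnN)⟩, ha⟩
  -- a divisor above √n is the cofactor of one below it
  have hcover : n.divisors ⊆ small ∪ small.image (n / ·) := by
    intro d hd
    rw [Nat.mem_divisors] at hd
    rw [mem_union, mem_image]
    by_cases hdd : d * d ≤ n
    · exact .inl (hmem d hd.1 hdd)
    · right
      have hd0 : 0 < d := Nat.pos_of_dvd_of_pos hd.1 hn
      refine ⟨n / d, hmem _ (Nat.div_dvd_of_dvd hd.1) ?_, Nat.div_div_self hd.1 hn.ne'⟩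
      have hlt : n / d < d := (Nat.div_lt_iff_lt_mul hd0).2 (not_le.1 hdd)
      calc n / d * (n / d) ≤ n / d * d := Nat.mul_le_mul_left _ hlt.le
        _ = n := Nat.div_mul_cancel hd.1
  calc #n.divisors ≤ #small + #(small.image (n / ·)) :=
        (card_le_card hcover).trans (card_union_le _ _)
    _ ≤ 2 * #small := by linarith [card_image_le (s := small) (f := (n / ·))]

lemma sum_card_divisors_mul_le (N : ℕ) (f : ℕ → ℝ) (hf : ∀ n, 0 ≤ f n) :
    ∑ n ∈ Icc 1 N, #n.divisors * f n
      ≤ 2 * ∑ a ∈ Icc 1 N.sqrt, ∑ b ∈ Icc 1 (N / a), f (a * b) := by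
  calc ∑ n ∈ Icc 1 N, #n.divisors * f n
      ≤ ∑ n ∈ Icc 1 N, 2 * ∑ a ∈ Icc 1 N.sqrt with a ∣ n, f n := by
        refine sum_le_sum fun n hn => ?_
        obtain ⟨hn1, hnN⟩ := mem_Icc.1 hn
        rw [sum_const, nsmul_eq_mul, ← mul_assoc]
        exact mul_le_mul_of_nonneg_right
          (by exact_mod_cast card_divisors_le_two_mul_card_filter_dvd hn1 hnN) (hf n)
    _ = 2 * ∑ a ∈ Icc 1 N.sqrt, ∑ n ∈ Icc 1 N with a ∣ n, f n := by
        rw [← mul_sum]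
        congr 1
        refine sum_comm' fun n a => ?_
        simp only [mem_filter, mem_Icc]
        tauto
    _ = _ := by
        congr 1
        exact sum_congr rfl fun a ha => sum_Icc_filter_dvd_eq N (mem_Icc.1 ha).1 f

lemma sum_card_divisors_div_sqrt_le (N : ℕ) :
    ∑ n ∈ Icc 1 N, (#n.divisors : ℝ) / √n ≤ 4 * √N * (1 + log N) := by
  have hinner : ∀ a ∈ Icc 1 N.sqrt, ∑ b ∈ Icc 1 (N / a), (√((a * b : ℕ) : ℝ))⁻¹
      ≤ 2 * √N * (a : ℝ)⁻¹ := fun a ha => by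
    have ha : (0 : ℝ) < a := by exact_mod_cast (mem_Icc.1 ha).1
    calc ∑ b ∈ Icc 1 (N / a), (√((a * b : ℕ) : ℝ))⁻¹
        = (√a)⁻¹ * ∑ b ∈ Icc 1 (N / a), (√b)⁻¹ := by
          simp only [Nat.cast_mul, sqrt_mul ha.le, mul_inv, mul_sum]
      _ ≤ (√a)⁻¹ * (2 * √(N / a : ℝ)) := by
          gcongr
          exact (sum_Icc_inv_sqrt_le _).trans (by gcongr; exact Nat.cast_div_le)
      _ = 2 * √N * (a : ℝ)⁻¹ := by
          rw [sqrt_div' _ ha.le]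
          field_simp
          rw [sq_sqrt ha.le, mul_comm]
  calc ∑ n ∈ Icc 1 N, (#n.divisors : ℝ) / √n
      ≤ 2 * ∑ a ∈ Icc 1 N.sqrt, ∑ b ∈ Icc 1 (N / a), (√((a * b : ℕ) : ℝ))⁻¹ := by
        simpa only [div_eq_mul_inv] using
          sum_card_divisors_mul_le N (fun n => (√n)⁻¹) fun n => by positivity
    _ ≤ 2 * ∑ a ∈ Icc 1 N.sqrt, 2 * √N * (a : ℝ)⁻¹ := by
        gcongr with a ha
        exact hinner a ha
    _ ≤ 4 * √N * (1 + log N) := by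
        rw [← mul_sum, ← mul_assoc, ← mul_assoc]
        gcongr
        · norm_num
        · exact sum_Icc_inv_le_one_add_log (Nat.sqrt_le_self N)

lemma card_le_div_add_one_of_modEq {s : Finset ℕ} {L N : ℕ} (hs : ∀ m ∈ s, m ≤ N)
    (hmod : ∀ m ∈ s, ∀ m' ∈ s, m ≡ m' [MOD L]) : #s ≤ N / L + 1 := by
  -- all elements of `s` share their remainder mod `L`, so `m ↦ m / L` is injective on `s`
  calc #s ≤ #(range (N / L + 1)) := by
        refine card_le_card_of_injOn (· / L) (fun m hm => ?_) (fun m hm m' hm' h => ?_)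
        · simpa [Nat.lt_succ_iff] using Nat.div_le_div_right (hs m hm)
        · rw [← Nat.div_add_mod m L, ← Nat.div_add_mod m' L, hmod m hm m' hm']
          simp only at h
          rw [h]
    _ = N / L + 1 := card_range _

lemma card_filter_dvd_and_dvd_add_le {N a b : ℕ} (r : ℕ) (ha : 0 < a) (hb : 0 < b)
    (hab : a.lcm b ≤ N) :
    (#{m ∈ Icc 1 N | a ∣ m ∧ b ∣ m + r} : ℝ)
      ≤ if a.gcd b ∣ r then 2 * (N : ℝ) / a.lcm b else 0 := by
  split_ifs with hg
  · have hcard : #{m ∈ Icc 1 N | a ∣ m ∧ b ∣ m + r} ≤ N / a.lcm b + 1 := by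
      refine card_le_div_add_one_of_modEq (fun m hm => (mem_Icc.1 (mem_filter.1 hm).1).2)
        fun m hm m' hm' => ?_
      obtain ⟨-, ham, hbm⟩ := mem_filter.1 hm
      obtain ⟨-, ham', hbm'⟩ := mem_filter.1 hm'
      refine Nat.mod_lcm ?_ (Nat.ModEq.add_right_cancel' r ?_)
      · exact (Nat.modEq_zero_iff_dvd.2 ham).trans (Nat.modEq_zero_iff_dvd.2 ham').symm
      · exact (Nat.modEq_zero_iff_dvd.2 hbm).trans (Nat.modEq_zero_iff_dvd.2 hbm').symm
    have hL : (0 : ℝ) < a.lcm b := by exact_mod_cast Nat.lcm_pos ha hb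
    calc (#{m ∈ Icc 1 N | a ∣ m ∧ b ∣ m + r} : ℝ) ≤ (N / a.lcm b : ℕ) + 1 := by
          exact_mod_cast hcard
      _ ≤ N / a.lcm b + N / a.lcm b := by
          gcongr
          · exact Nat.cast_div_le
          · rw [le_div_iff₀ hL, one_mul]
            exact_mod_cast hab
      _ = 2 * N / a.lcm b := by ring
  · rw [Nat.cast_nonpos, card_eq_zero, filter_eq_empty_iff]
    rintro m - ⟨ham, hbm⟩
    exact hg ((Nat.dvd_add_right ((Nat.gcd_dvd_left a b).trans ham)).1
      ((Nat.gcd_dvd_right a b).trans hbm))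

lemma sum_card_divisors_mul_shift_le_sum_card (N r : ℕ) :
    ∑ m ∈ Icc 1 (N - r), #m.divisors * #(m + r).divisors
      ≤ 4 * ∑ a ∈ Icc 1 N.sqrt, ∑ b ∈ Icc 1 N.sqrt, #{m ∈ Icc 1 N | a ∣ m ∧ b ∣ m + r} := by
  set I := Icc 1 N.sqrt
  calc ∑ m ∈ Icc 1 (N - r), #m.divisors * #(m + r).divisors
      ≤ ∑ m ∈ Icc 1 (N - r), (2 * #{a ∈ I | a ∣ m}) * (2 * #{b ∈ I | b ∣ m + r}) := by
        gcongr with m hm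
        all_goals
          obtain ⟨hm1, hmN⟩ := mem_Icc.1 hm
          exact card_divisors_le_two_mul_card_filter_dvd (by omega) (by omega)
    _ = 4 * ∑ m ∈ Icc 1 (N - r), ∑ p ∈ I ×ˢ I, if p.1 ∣ m ∧ p.2 ∣ m + r then 1 else 0 := by
        simp only [mul_sum, ← card_filter]
        refine sum_congr rfl fun m _ => ?_
        rw [filter_product (· ∣ m) (· ∣ m + r), card_product]
        ring
    _ = 4 * ∑ p ∈ I ×ˢ I, #{m ∈ Icc 1 (N - r) | p.1 ∣ m ∧ p.2 ∣ m + r} := by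
        rw [sum_comm]
        simp only [card_filter]
    _ ≤ 4 * ∑ p ∈ I ×ˢ I, #{m ∈ Icc 1 N | p.1 ∣ m ∧ p.2 ∣ m + r} := by
        gcongr
        exact Nat.sub_le N r
    _ = _ := by rw [sum_product]

lemma sum_card_divisors_mul_shift_le (N r : ℕ) :
    ∑ m ∈ Icc 1 (N - r), (#m.divisors * #(m + r).divisors : ℝ)
      ≤ 8 * N * ∑ a ∈ Icc 1 N.sqrt, ∑ b ∈ Icc 1 N.sqrt,
          if a.gcd b ∣ r then ((a.lcm b : ℕ) : ℝ)⁻¹ else 0 := by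
  set I := Icc 1 N.sqrt
  calc ∑ m ∈ Icc 1 (N - r), (#m.divisors * #(m + r).divisors : ℝ)
      ≤ 4 * ∑ a ∈ I, ∑ b ∈ I, (#{m ∈ Icc 1 N | a ∣ m ∧ b ∣ m + r} : ℝ) := by
        exact_mod_cast sum_card_divisors_mul_shift_le_sum_card N r
    _ ≤ 4 * ∑ a ∈ I, ∑ b ∈ I, if a.gcd b ∣ r then 2 * (N : ℝ) / a.lcm b else 0 := by
        gcongr with a ha b hb
        obtain ⟨ha1, haN⟩ := mem_Icc.1 ha
        obtain ⟨hb1, hbN⟩ := mem_Icc.1 hb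
        refine card_filter_dvd_and_dvd_add_le r ha1 hb1 ?_
        calc a.lcm b ≤ a * b := Nat.lcm_le_mul ha1 hb1
          _ ≤ N.sqrt * N.sqrt := Nat.mul_le_mul haN hbN
          _ ≤ N := Nat.sqrt_le N
    _ = _ := by
        simp only [mul_sum]
        refine sum_congr rfl fun a _ => sum_congr rfl fun b _ => ?_
        split_ifs <;> ring

lemma sum_Icc_inv_mul_ite_gcd_dvd_le (N : ℕ) {a : ℕ} (b : ℕ) (ha : 0 < a) :
    ∑ r ∈ Icc 1 N, (r : ℝ)⁻¹ * (if a.gcd b ∣ r then ((a.lcm b : ℕ) : ℝ)⁻¹ else 0)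
      ≤ (1 + log N) * ((a : ℝ)⁻¹ * (b : ℝ)⁻¹) :=
  calc ∑ r ∈ Icc 1 N, (r : ℝ)⁻¹ * (if a.gcd b ∣ r then ((a.lcm b : ℕ) : ℝ)⁻¹ else 0)
      = ((a.lcm b : ℕ) : ℝ)⁻¹ * ∑ r ∈ Icc 1 N with a.gcd b ∣ r, (r : ℝ)⁻¹ := by
        rw [sum_filter, mul_sum]
        refine sum_congr rfl fun r _ => ?_
        split_ifs <;> ring
    _ ≤ ((a.lcm b : ℕ) : ℝ)⁻¹ * ((1 + log N) / a.gcd b) := by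
        gcongr
        exact sum_Icc_filter_dvd_inv_le N (Nat.gcd_pos_of_pos_left b ha)
    _ = (1 + log N) * ((a : ℝ)⁻¹ * (b : ℝ)⁻¹) := by
        rw [← mul_inv, ← Nat.cast_mul, ← Nat.gcd_mul_lcm a b, Nat.cast_mul]
        ring

lemma sum_sum_card_divisors_mul_div_sub_le (N : ℕ) :
    ∑ n ∈ Icc 1 N, ∑ m ∈ Ico 1 n, (#m.divisors * #n.divisors : ℝ) / (n - m)
      ≤ 8 * N * (1 + log N) ^ 3 := by
  set I := Icc 1 N.sqrt
  calc ∑ n ∈ Icc 1 N, ∑ m ∈ Ico 1 n, (#m.divisors * #n.divisors : ℝ) / (n - m)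
      = ∑ r ∈ Icc 1 N,
          (r : ℝ)⁻¹ * ∑ m ∈ Icc 1 (N - r), (#m.divisors * #(m + r).divisors : ℝ) := by
        rw [sum_Icc_sum_Ico_eq_sum_Icc_sum_Icc_sub]
        simp only [mul_sum, Nat.cast_add, add_sub_cancel_left, div_eq_inv_mul]
    _ ≤ ∑ r ∈ Icc 1 N, (r : ℝ)⁻¹ *
          (8 * N * ∑ a ∈ I, ∑ b ∈ I, if a.gcd b ∣ r then ((a.lcm b : ℕ) : ℝ)⁻¹ else 0) := by
        gcongr with r
        exact sum_card_divisors_mul_shift_le N r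
    _ = 8 * N * ∑ a ∈ I, ∑ b ∈ I,
          ∑ r ∈ Icc 1 N, (r : ℝ)⁻¹ * (if a.gcd b ∣ r then ((a.lcm b : ℕ) : ℝ)⁻¹ else 0) := by
        simp only [mul_sum]
        rw [sum_comm]
        refine sum_congr rfl fun a _ => ?_
        rw [sum_comm]
        refine sum_congr rfl fun b _ => sum_congr rfl fun r _ => by ring
    _ ≤ 8 * N * ∑ a ∈ I, ∑ b ∈ I, (1 + log N) * ((a : ℝ)⁻¹ * (b : ℝ)⁻¹) := by
        gcongr with a ha b
        exact sum_Icc_inv_mul_ite_gcd_dvd_le N b (mem_Icc.1 ha).1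
    _ = 8 * N * (1 + log N) * (∑ a ∈ I, (a : ℝ)⁻¹) ^ 2 := by
        rw [sq, sum_mul_sum, mul_sum, mul_sum]
        refine sum_congr rfl fun a _ => ?_
        rw [mul_sum, mul_sum]
        refine sum_congr rfl fun b _ => by ring
    _ ≤ 8 * N * (1 + log N) * (1 + log N) ^ 2 := by
        gcongr
        exact sum_Icc_inv_le_one_add_log (Nat.sqrt_le_self N)
    _ = 8 * N * (1 + log N) ^ 3 := by ring

lemma inv_sqrt_mul_mul_log_div_le {x y : ℝ} (hx : 0 < x) (hxy : x < y) :
    (√(x * y) * log (y / x))⁻¹ ≤ 2 * (√(x * y))⁻¹ + 2 * (y - x)⁻¹ := by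
  have hy : 0 < y := hx.trans hxy
  have hs : 0 < √(x * y) := by positivity
  rcases le_or_gt (2 * x) y with hfar | hnear
  · have hlog : 1 / 2 ≤ log (y / x) := by
      refine le_trans ?_ (log_le_log two_pos ((le_div_iff₀ hx).2 hfar))
      linarith [log_two_gt_d9]
    calc (√(x * y) * log (y / x))⁻¹ ≤ (√(x * y) * (1 / 2))⁻¹ := by gcongr
      _ = 2 * (√(x * y))⁻¹ := by field_simp
      _ ≤ _ := le_add_of_nonneg_right (by have := sub_pos.2 hxy; positivity)
  · have hsqrt : y / 2 ≤ √(x * y) := (le_sqrt (by positivity) (by positivity)).2 (by nlinarith)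
    have hlog : (y - x) / y ≤ log (y / x) := by
      have := one_sub_inv_le_log_of_pos (div_pos hy hx)
      rwa [inv_div, one_sub_div hy.ne'] at this
    have hd : 0 < y - x := sub_pos.2 hxy
    calc (√(x * y) * log (y / x))⁻¹ ≤ (y / 2 * ((y - x) / y))⁻¹ := by gcongr
      _ = 2 * (y - x)⁻¹ := by field_simp
      _ ≤ _ := le_add_of_nonneg_left (by positivity)

lemma sum_sum_card_divisors_div_sqrt_mul_log_le (N : ℕ) :
    ∑ n ∈ Icc 1 N, ∑ m ∈ Ico 1 n,
        (#m.divisors * #n.divisors : ℝ) / (√((m : ℝ) * n) * log ((n : ℝ) / m))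
      ≤ 48 * N * (1 + log N) ^ 3 := by
  set A := ∑ n ∈ Icc 1 N, (#n.divisors : ℝ) / √n
  have hpair : ∑ n ∈ Icc 1 N, ∑ m ∈ Ico 1 n, (#m.divisors * #n.divisors : ℝ) * (√((m : ℝ) * n))⁻¹
      ≤ A ^ 2 :=
    calc _ ≤ ∑ n ∈ Icc 1 N, ∑ m ∈ Icc 1 N,
            (#m.divisors * #n.divisors : ℝ) * (√((m : ℝ) * n))⁻¹ := by
          refine sum_le_sum fun n hn => sum_le_sum_of_subset_of_nonneg ?_ fun _ _ _ => by positivity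
          exact Ico_subset_Icc_self.trans (Icc_subset_Icc_right (mem_Icc.1 hn).2)
      _ = A ^ 2 := by
          rw [sq, sum_mul_sum, sum_comm]
          refine sum_congr rfl fun n _ => sum_congr rfl fun m _ => ?_
          rw [sqrt_mul (Nat.cast_nonneg _)]
          ring
  have hA : A ≤ 4 * √N * (1 + log N) := sum_card_divisors_div_sqrt_le N
  have hlog : 1 ≤ 1 + log N := le_add_of_nonneg_right (log_natCast_nonneg N)
  calc ∑ n ∈ Icc 1 N, ∑ m ∈ Ico 1 n,
        (#m.divisors * #n.divisors : ℝ) / (√((m : ℝ) * n) * log ((n : ℝ) / m))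
      ≤ ∑ n ∈ Icc 1 N, ∑ m ∈ Ico 1 n, (#m.divisors * #n.divisors : ℝ) *
          (2 * (√((m : ℝ) * n))⁻¹ + 2 * ((n : ℝ) - m)⁻¹) := by
        gcongr with n _ m hm
        obtain ⟨hm1, hmn⟩ := mem_Ico.1 hm
        rw [div_eq_mul_inv]
        gcongr
        exact inv_sqrt_mul_mul_log_div_le (by exact_mod_cast hm1) (by exact_mod_cast hmn)
    _ = 2 * ∑ n ∈ Icc 1 N, ∑ m ∈ Ico 1 n,
            (#m.divisors * #n.divisors : ℝ) * (√((m : ℝ) * n))⁻¹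
          + 2 * ∑ n ∈ Icc 1 N, ∑ m ∈ Ico 1 n, (#m.divisors * #n.divisors : ℝ) / (n - m) := by
        simp only [mul_sum, ← sum_add_distrib, div_eq_mul_inv]
        refine sum_congr rfl fun n _ => sum_congr rfl fun m _ => by ring
    _ ≤ 2 * (4 * √N * (1 + log N)) ^ 2 + 2 * (8 * N * (1 + log N) ^ 3) := by
        gcongr
        · exact hpair.trans (pow_le_pow_left₀ (by positivity) hA 2)
        · exact sum_sum_card_divisors_mul_div_sub_le N
    _ ≤ 48 * N * (1 + log N) ^ 3 := by
        rw [mul_pow, mul_pow, sq_sqrt (Nat.cast_nonneg N)]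
        have : (1 + log N) ^ 2 ≤ (1 + log N) ^ 3 := pow_le_pow_right₀ hlog (by norm_num)
        nlinarith [Nat.cast_nonneg (α := ℝ) N]

theorem stmt_7 :
    (fun T : ℝ => ∑ n ∈ Finset.Icc 1 ⌊T⌋₊, ∑ m ∈ Finset.Ico 1 n,
        ((m.divisors.card : ℝ) * (n.divisors.card : ℝ)) /
          (Real.sqrt ((m : ℝ) * n) * Real.log ((n : ℝ) / m)))
      =O[atTop] (fun T : ℝ => T * (Real.log T)^3) := by
  refine IsBigO.of_bound 384 ?_
  filter_upwards [eventually_ge_atTop (3 : ℝ)] with T hT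
  have hlogT : 1 ≤ log T := by
    rw [le_log_iff_exp_le (by linarith)]
    linarith [exp_one_lt_d9]
  have hN : 0 < ⌊T⌋₊ := Nat.floor_pos.2 (by linarith)
  have hNT : (⌊T⌋₊ : ℝ) ≤ T := Nat.floor_le (by linarith)
  have hlogN : log ⌊T⌋₊ ≤ log T := log_le_log (by exact_mod_cast hN) hNT
  have hterm : ∀ n ∈ Icc 1 ⌊T⌋₊, ∀ m ∈ Ico 1 n, 0 ≤ (#m.divisors * #n.divisors : ℝ) /
      (√((m : ℝ) * n) * log ((n : ℝ) / m)) := fun n _ m hm => by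
    obtain ⟨hm1, hmn⟩ := mem_Ico.1 hm
    have hm0 : (0 : ℝ) < m := by exact_mod_cast hm1
    have : 0 ≤ log ((n : ℝ) / m) := log_nonneg ((one_le_div hm0).2 (by exact_mod_cast hmn.le))
    positivity
  rw [Real.norm_of_nonneg (sum_nonneg fun n hn => sum_nonneg (hterm n hn)),
    Real.norm_of_nonneg (by positivity)]
  calc _ ≤ 48 * ⌊T⌋₊ * (1 + log ⌊T⌋₊) ^ 3 := sum_sum_card_divisors_div_sqrt_mul_log_le _
    _ ≤ 48 * T * (2 * log T) ^ 3 := by gcongr; linarith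
    _ = 384 * (T * log T ^ 3) := by ring
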